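/- arXiv:2509.07876 — 4 statements merged into one kernel-verified Lean document; each statement's English description precedes it below -/
import Mathlib

section
/- Let Γ = Σ_{i=0}^ℓ κ^i Λ_i be a positive definite Hermitian matrix with κ > 1, where the Λ_i are orthogonal projectors summing to the identity with pairwise orthogonal ranges. Let O be a unitary and Π a projector, and suppose Λ_{i'} O Λ_i = 0 whenever |i' - i| > 1, Γ commutes with Π, and Λ_{i-1} O Π Λ_i = 0 for all i. Then for all i, i' with i' = i: ‖Λ_i (Γ^{1/2} O Π - κ^{-1/2} O Π Γ^{1/2}) Γ^{-1/2} Λ_i‖ = ((√κ - 1)/√κ)·‖Λ_i O Π Λ_i‖, and for i' = i+1: ‖Λ_{i+1} (Γ^{1/2} O Π - κ^{-1/2} O Π Γ^{1/2}) Γ^{-1/2} Λ_i‖ = ((κ - 1)/√κ)·‖Λ_{i+1} O Π Λ_i‖, while all other blocks (|i'-i| > 1, or i' = i - 1) vanish. -/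
lemma sum_smul_mul_proj {d ℓ : ℕ} (Λ : Fin (ℓ+1) → Matrix (Fin d) (Fin d) ℂ)
    (hidem : ∀ i, Λ i * Λ i = Λ i) (horth : ∀ i j, i ≠ j → Λ i * Λ j = 0)
    (c : Fin (ℓ+1) → ℂ) (i : Fin (ℓ+1)) :
    (∑ j, c j • Λ j) * Λ i = c i • Λ i := by
  rw [Finset.sum_mul, Finset.sum_eq_single i]
  · rw [smul_mul_assoc, hidem]
  · intro j _ hj; rw [smul_mul_assoc, horth j i hj, smul_zero]
  · simp

lemma proj_mul_sum_smul {d ℓ : ℕ} (Λ : Fin (ℓ+1) → Matrix (Fin d) (Fin d) ℂ)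
    (hidem : ∀ i, Λ i * Λ i = Λ i) (horth : ∀ i j, i ≠ j → Λ i * Λ j = 0)
    (c : Fin (ℓ+1) → ℂ) (i : Fin (ℓ+1)) :
    Λ i * (∑ j, c j • Λ j) = c i • Λ i := by
  rw [Finset.mul_sum, Finset.sum_eq_single i]
  · rw [mul_smul_comm, hidem]
  · intro j _ hj; rw [mul_smul_comm, horth i j (Ne.symm hj), smul_zero]
  · simp

/-- Spectral norm (ℓ₂ → ℓ₂ operator norm) of a complex square matrix. -/
noncomputable def specNorm {n : Type*} [Fintype n] [DecidableEq n]
    (A : Matrix n n ℂ) : ℝ :=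
  ‖Matrix.toEuclideanCLM (𝕜 := ℂ) A‖

/-- `Γ^{1/2} = Σ_i κ^{i/2} Λ_i` for `Γ = Σ_i κ^i Λ_i`. -/
noncomputable def Ghalf {d ℓ : ℕ} (κ : ℝ)
    (Λ : Fin (ℓ + 1) → Matrix (Fin d) (Fin d) ℂ) : Matrix (Fin d) (Fin d) ℂ :=
  ∑ i, ((Real.sqrt (κ ^ i.val) : ℝ) : ℂ) • Λ i

/-- `Γ^{-1/2} = Σ_i κ^{-i/2} Λ_i` for `Γ = Σ_i κ^i Λ_i`. -/
noncomputable def GnegHalf {d ℓ : ℕ} (κ : ℝ)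
    (Λ : Fin (ℓ + 1) → Matrix (Fin d) (Fin d) ℂ) : Matrix (Fin d) (Fin d) ℂ :=
  ∑ i, (((Real.sqrt (κ ^ i.val))⁻¹ : ℝ) : ℂ) • Λ i

/-- The `(i', i)` block `Λ_{i'} (Γ^{1/2} O Π − κ^{-1/2} O Π Γ^{1/2}) Γ^{-1/2} Λ_i`. -/
noncomputable def blk {d ℓ : ℕ} (κ : ℝ)
    (Λ : Fin (ℓ + 1) → Matrix (Fin d) (Fin d) ℂ)
    (O P : Matrix (Fin d) (Fin d) ℂ) (i' i : Fin (ℓ + 1)) :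
    Matrix (Fin d) (Fin d) ℂ :=
  Λ i' * (Ghalf κ Λ * O * P - (((Real.sqrt κ)⁻¹ : ℝ) : ℂ) • (O * P * Ghalf κ Λ)) *
    GnegHalf κ Λ * Λ i

set_option synthInstance.maxHeartbeats 1000000 in
lemma specNorm_smul {n : Type*} [Fintype n] [DecidableEq n] (z : ℂ) (A : Matrix n n ℂ) :
    specNorm (z • A) = ‖z‖ * specNorm A := by
  unfold specNorm
  rw [map_smul]
  exact norm_smul z (Matrix.toEuclideanCLM (𝕜 := ℂ) A)

/-- For `Γ = Σ_{i=0}^ℓ κ^i Λ_i` with `κ > 1` and mutually orthogonal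
projectors `Λ_i` summing to the identity, a unitary `O` and a projector `P` such that
`Λ_{i'} O Λ_i = 0` for `|i'−i| > 1`, `Γ` commutes with `P`, and the superdiagonal
blocks `Λ_{i−1} O P Λ_i` vanish, the blocks of
`(Γ^{1/2} O P − κ^{-1/2} O P Γ^{1/2}) Γ^{-1/2}` satisfy:
the diagonal block has norm `((√κ − 1)/√κ)·‖Λ_i O P Λ_i‖`, the subdiagonal block has
norm `((κ − 1)/√κ)·‖Λ_{i+1} O P Λ_i‖`, and all other blocks vanish. -/
theorem mla_block_structure (d ℓ : ℕ) (κ : ℝ) (hκ : 1 < κ)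
    (Λ : Fin (ℓ + 1) → Matrix (Fin d) (Fin d) ℂ)
    (hherm : ∀ i, (Λ i).IsHermitian)
    (hidem : ∀ i, Λ i * Λ i = Λ i)
    (horth : ∀ i j, i ≠ j → Λ i * Λ j = 0)
    (hsum : ∑ i, Λ i = 1)
    (O P : Matrix (Fin d) (Fin d) ℂ)
    (hO : O ∈ Matrix.unitaryGroup (Fin d) ℂ)
    (hPherm : P.IsHermitian) (hPidem : P * P = P)
    (hladder : ∀ i' i : Fin (ℓ + 1), ((i' : ℕ) + 1 < i ∨ (i : ℕ) + 1 < i') →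
      Λ i' * O * Λ i = 0)
    (hcomm : (∑ i, ((κ : ℂ) ^ i.val) • Λ i) * P = P * ∑ i, ((κ : ℂ) ^ i.val) • Λ i)
    (hsuper : ∀ i' i : Fin (ℓ + 1), (i' : ℕ) + 1 = i → Λ i' * O * P * Λ i = 0) :
    (∀ i : Fin (ℓ + 1),
      specNorm (blk κ Λ O P i i) =
        (Real.sqrt κ - 1) / Real.sqrt κ * specNorm (Λ i * O * P * Λ i)) ∧
    (∀ i' i : Fin (ℓ + 1), (i' : ℕ) = (i : ℕ) + 1 →
      specNorm (blk κ Λ O P i' i) =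
        (κ - 1) / Real.sqrt κ * specNorm (Λ i' * O * P * Λ i)) ∧
    (∀ i' i : Fin (ℓ + 1),
      ((i' : ℕ) + 1 < i ∨ (i : ℕ) + 1 < i' ∨ (i' : ℕ) + 1 = i) →
      blk κ Λ O P i' i = 0) := by
  have hκ0 : (0:ℝ) < κ := lt_trans one_pos hκ
  set sq : Fin (ℓ+1) → ℝ := fun j => Real.sqrt (κ ^ j.val) with hsq
  have hsq_pos : ∀ j, 0 < sq j := fun j => Real.sqrt_pos.mpr (pow_pos hκ0 _)
  have hsqκ : 0 < Real.sqrt κ := Real.sqrt_pos.mpr hκ0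
  have hsqκ1 : 1 ≤ Real.sqrt κ := Real.one_le_sqrt.mpr hκ.le
  -- block rewrite lemmas
  have hGR : ∀ i, Ghalf κ Λ * Λ i = ((sq i : ℝ) : ℂ) • Λ i := fun i =>
    sum_smul_mul_proj Λ hidem horth _ i
  have hGL : ∀ i, Λ i * Ghalf κ Λ = ((sq i : ℝ) : ℂ) • Λ i := fun i =>
    proj_mul_sum_smul Λ hidem horth _ i
  have hNR : ∀ i, GnegHalf κ Λ * Λ i = (((sq i : ℝ) : ℂ))⁻¹ • Λ i := by
    intro i
    have := sum_smul_mul_proj Λ hidem horth (fun j => ((((sq j)⁻¹ : ℝ)) : ℂ)) i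
    simpa [GnegHalf, Complex.ofReal_inv] using this
  have blk_eq : ∀ i' i, blk κ Λ O P i' i =
      (((sq i' * (sq i)⁻¹ - (Real.sqrt κ)⁻¹ : ℝ)) : ℂ) • (Λ i' * O * P * Λ i) := by
    intro i' i
    have hGL' : ∀ M, Λ i' * (Ghalf κ Λ * M) = ((sq i' : ℝ) : ℂ) • (Λ i' * M) := by
      intro M; rw [← mul_assoc, hGL i', smul_mul_assoc]
    have hsi : ((sq i : ℝ) : ℂ) ≠ 0 := by
      exact_mod_cast (hsq_pos i).ne'
    simp only [blk, mul_sub, sub_mul, smul_mul_assoc, mul_smul_comm, mul_assoc,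
      hNR i, hGR i, hGL', smul_smul, smul_sub]
    push_cast
    match_scalars
    field_simp
  -- P commutes with each Λ j
  have hOD : ∀ j k, j ≠ k → Λ j * P * Λ k = 0 := by
    intro j k hjk
    have S := hcomm
    have e1 : Λ j * ((∑ i, ((κ : ℂ) ^ i.val) • Λ i) * P) * Λ k
        = ((κ : ℂ) ^ (j : ℕ)) • (Λ j * P * Λ k) := by
      rw [← mul_assoc, proj_mul_sum_smul Λ hidem horth _ j, smul_mul_assoc, smul_mul_assoc]
    have e2 : Λ j * (P * ∑ i, ((κ : ℂ) ^ i.val) • Λ i) * Λ k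
        = ((κ : ℂ) ^ (k : ℕ)) • (Λ j * P * Λ k) := by
      rw [mul_assoc, mul_assoc, sum_smul_mul_proj Λ hidem horth _ k,
        mul_smul_comm, mul_smul_comm, ← mul_assoc]
    have e3 : ((κ : ℂ) ^ (j : ℕ)) • (Λ j * P * Λ k)
        = ((κ : ℂ) ^ (k : ℕ)) • (Λ j * P * Λ k) := by
      rw [← e1, ← e2, S]
    have hne : ((κ : ℂ) ^ (j : ℕ)) ≠ ((κ : ℂ) ^ (k : ℕ)) := by
      have hmono : StrictMono (fun n : ℕ => κ ^ n) := fun a b h => by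
        exact pow_lt_pow_right₀ hκ h
      have : κ ^ (j : ℕ) ≠ κ ^ (k : ℕ) :=
        hmono.injective.ne (fun h => hjk (Fin.ext h))
      exact_mod_cast this
    have := sub_eq_zero.mpr e3
    rw [← sub_smul] at this
    rcases smul_eq_zero.mp this with h | h
    · exact absurd (sub_eq_zero.mp h) hne
    · exact h
  have hPcomm : ∀ j, Λ j * P = P * Λ j := by
    intro j
    have h1 : Λ j * P = Λ j * P * Λ j := by
      conv_lhs => rw [← mul_one (Λ j * P), ← hsum]
      rw [Finset.mul_sum, Finset.sum_eq_single j]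
      · intro k _ hk; exact hOD j k (Ne.symm hk)
      · simp
    have h2 : P * Λ j = Λ j * (P * Λ j) := by
      conv_lhs => rw [← one_mul (P * Λ j), ← hsum]
      rw [Finset.sum_mul, Finset.sum_eq_single j]
      · intro k _ hk
        rw [← mul_assoc]; exact hOD k j hk
      · simp
    rw [h1, h2, mul_assoc]
  refine ⟨?_, ?_, ?_⟩
  · -- diagonal
    intro i
    rw [blk_eq i i, specNorm_smul]
    have hcancel : sq i * (sq i)⁻¹ = 1 := mul_inv_cancel₀ (hsq_pos i).ne'
    have hnn : (0:ℝ) ≤ 1 - (Real.sqrt κ)⁻¹ := by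
      have : (Real.sqrt κ)⁻¹ ≤ 1 := by
        rw [inv_le_one_iff₀]; right; exact hsqκ1
      linarith
    rw [Complex.norm_real, hcancel]
    congr 1
    rw [Real.norm_of_nonneg hnn]
    field_simp
  · -- subdiagonal
    intro i' i hii
    rw [blk_eq i' i, specNorm_smul]
    have hsq' : sq i' = sq i * Real.sqrt κ := by
      rw [hsq]
      simp only [hii, pow_succ]
      rw [Real.sqrt_mul (pow_nonneg hκ0.le _)]
    have hcancel : sq i * Real.sqrt κ * (sq i)⁻¹ = Real.sqrt κ := by
      field_simp [(hsq_pos i).ne']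
    have hval : sq i' * (sq i)⁻¹ - (Real.sqrt κ)⁻¹ = (κ - 1) / Real.sqrt κ := by
      rw [hsq', hcancel]
      rw [eq_div_iff hsqκ.ne', sub_mul, inv_mul_cancel₀ hsqκ.ne',
        Real.mul_self_sqrt hκ0.le]
    rw [Complex.norm_real, hval]
    congr 1
    exact Real.norm_of_nonneg (div_nonneg (by linarith) hsqκ.le)
  · -- zero blocks
    intro i' i h
    rcases h with h | h | h
    · rw [blk_eq i' i]
      have hz : Λ i' * O * P * Λ i = 0 := by
        rw [mul_assoc (Λ i' * O) P (Λ i), ← hPcomm i, ← mul_assoc,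
          hladder i' i (Or.inl h), zero_mul]
      rw [hz, smul_zero]
    · rw [blk_eq i' i]
      have hz : Λ i' * O * P * Λ i = 0 := by
        rw [mul_assoc (Λ i' * O) P (Λ i), ← hPcomm i, ← mul_assoc,
          hladder i' i (Or.inr h), zero_mul]
      rw [hz, smul_zero]
    · rw [blk_eq i' i, hsuper i' i h, smul_zero]
end

section
/- Let X be a finite set, Y = ℤ/M, and consider the Hilbert space ℂ[Y^X]. For x ∈ X and y ∈ Y define the diagonal unitary O_{x,y} by O_{x,y}|f⟩ = e^{2πi·y·f(x)/M}|f⟩. Then the uniform superposition state |Uniform⟩ = M^{-N/2} Σ_{f ∈ Y^X} |f⟩ (with N = |X|) satisfies: applying O_{x,y} to any state in the span of states of the form |v_{x₁,…,x_t}^{y₁,…,y_t}⟩ := (normalization)·Σ_{f: f(x_i)=y_i ∀i} |f⟩ yields a state in the span of such states with t+1 constraints. Consequently, O_{x,y} maps Space_t into Space_{t+1}, i.e., O_{x,y} Π_{≤t} = Π_{≤t+1} O_{x,y} Π_{≤t}, where Π_{≤t} projects onto the span of all states with at most t constraints. -/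
open Classical

/-- The phase-query oracle component `O_{x,y}`, a diagonal unitary on `ℂ[Y^X]`
acting as `O_{x,y}|f⟩ = e^{2πi·y·f(x)/M}|f⟩`. -/
noncomputable def queryMat (N M : ℕ) [NeZero M] (x : Fin N) (y : ZMod M) :
    Matrix (Fin N → ZMod M) (Fin N → ZMod M) ℂ :=
  Matrix.diagonal fun f =>
    Complex.exp (2 * Real.pi * Complex.I * ((y * f x).val : ℕ) / (M : ℕ))

/-- The (unnormalised) state `|v_{x₁,…,x_t}^{y₁,…,y_t}⟩`, i.e. the uniform
superposition over all `f : X → Y` consistent with the constraints `c`. -/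
noncomputable def constraintVec (N M : ℕ) [NeZero M] {t : ℕ}
    (c : Fin t → Fin N × ZMod M) : (Fin N → ZMod M) → ℂ :=
  fun f => if ∀ i, f (c i).1 = (c i).2 then 1 else 0

/-- `Space_t`: the span of all constraint states with `t` constraints
(for `t = 0` this is the span of the uniform superposition). -/
noncomputable def spaceT (N M : ℕ) [NeZero M] (t : ℕ) :
    Submodule ℂ ((Fin N → ZMod M) → ℂ) :=
  Submodule.span ℂ (Set.range (constraintVec N M (t := t)))

lemma query_constraint (N M : ℕ) [NeZero M] (x : Fin N) (y : ZMod M) {t : ℕ}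
    (c : Fin t → Fin N × ZMod M) :
    (queryMat N M x y).mulVecLin (constraintVec N M c) =
      ∑ z : ZMod M,
        Complex.exp (2 * Real.pi * Complex.I * ((y * z).val : ℕ) / (M : ℕ)) •
          constraintVec N M (Fin.cons (x, z) c) := by
  funext f
  simp only [Matrix.mulVecLin_apply, queryMat, Matrix.mulVec_diagonal, constraintVec,
    Finset.sum_apply, Pi.smul_apply, smul_eq_mul, Fin.forall_fin_succ, Fin.cons_zero,
    Fin.cons_succ]
  by_cases hP : ∀ i, f (c i).1 = (c i).2
  · simp only [hP, implies_true, and_true, if_true, mul_ite, mul_one, mul_zero]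
    rw [Finset.sum_ite_eq (Finset.univ : Finset (ZMod M)) (f x)
      (fun z => Complex.exp (2 * Real.pi * Complex.I * ((y * z).val : ℕ) / (M : ℕ)))]
    simp
  · simp [hP]

/-- Each oracle component `O_{x,y}` maps `Space_t` into
`Space_{t+1}`: the image of the span of `t`-constraint states under `O_{x,y}` lies
in the span of `(t+1)`-constraint states. -/
theorem query_maps_space (N M : ℕ) [NeZero M] (x : Fin N) (y : ZMod M) (t : ℕ) :
    Submodule.map (Matrix.mulVecLin (queryMat N M x y)) (spaceT N M t) ≤
      spaceT N M (t + 1) := by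
  rw [spaceT, Submodule.map_span, Submodule.span_le]
  rintro _ ⟨_, ⟨c, rfl⟩, rfl⟩
  rw [query_constraint]
  exact Submodule.sum_mem _ fun z _ =>
    Submodule.smul_mem _ _ (Submodule.subset_span ⟨Fin.cons (x, z) c, rfl⟩)
end

section
/- Let Π_{≤0} ≤ Π_{≤1} ≤ ⋯ ≤ Π_{≤N} be an increasing family of orthogonal projectors, O a unitary with O·Π_{≤t} = Π_{≤t+1}·O·Π_{≤t} for all t, and let Λ, Λ' be projectors commuting with every Π_{≤t}. Then t ↦ ‖Λ' Π_{≤t} O Π_{≤t-1} Λ‖ is monotonically non-decreasing in t. -/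
open Matrix in
lemma specNorm_mul_le {n : Type*} [Fintype n] [DecidableEq n]
    (A B : Matrix n n ℂ) : specNorm (A * B) ≤ specNorm A * specNorm B := by
  rw [specNorm, specNorm, specNorm, _root_.map_mul]
  exact norm_mul_le _ _

/-- A hermitian idempotent matrix has spectral norm at most 1. -/
lemma specNorm_proj_le_one {n : Type*} [Fintype n] [DecidableEq n]
    (Q : Matrix n n ℂ) (hherm : Q.IsHermitian) (hidem : Q * Q = Q) :
    specNorm Q ≤ 1 := by
  set a := Matrix.toEuclideanCLM (𝕜 := ℂ) Q with ha
  have hstar : star a = a := by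
    rw [ha, ← map_star]
    exact congrArg _ hherm.eq
  have h2 : a * a = a := by rw [ha, ← map_mul, hidem]
  have hsq : ‖a‖ * ‖a‖ = ‖a‖ := by
    calc ‖a‖ * ‖a‖ = ‖star a * a‖ := (CStarRing.norm_star_mul_self (x := a)).symm
    _ = ‖a‖ := by rw [hstar, h2]
  have := norm_nonneg a
  show ‖a‖ ≤ 1
  nlinarith

/-- Let `Π_{≤0} ≤ Π_{≤1} ≤ ⋯` be an increasing family of
orthogonal projectors, `O` a unitary with `O Π_{≤t} = Π_{≤t+1} O Π_{≤t}` for all `t`,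
and `Λ, Λ'` projectors commuting with every `Π_{≤t}`.  Then
`t ↦ ‖Λ' Π_{≤t} O Π_{≤t-1} Λ‖` is monotonically non-decreasing in `t`. -/
theorem progress_norm_monotone (d : ℕ) (P : ℕ → Matrix (Fin d) (Fin d) ℂ)
    (hPherm : ∀ t, (P t).IsHermitian)
    (hPidem : ∀ t, P t * P t = P t)
    (hPmono : ∀ t, P (t + 1) * P t = P t)
    (O : Matrix (Fin d) (Fin d) ℂ) (hO : O ∈ Matrix.unitaryGroup (Fin d) ℂ)
    (hstep : ∀ t, O * P t = P (t + 1) * O * P t)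
    (Λ Λ' : Matrix (Fin d) (Fin d) ℂ)
    (hΛherm : Λ.IsHermitian) (hΛidem : Λ * Λ = Λ)
    (hΛ'herm : Λ'.IsHermitian) (hΛ'idem : Λ' * Λ' = Λ')
    (hΛcomm : ∀ t, Λ * P t = P t * Λ)
    (hΛ'comm : ∀ t, Λ' * P t = P t * Λ') :
    ∀ t : ℕ,
      specNorm (Λ' * P (t + 1) * O * P t * Λ) ≤
        specNorm (Λ' * P (t + 2) * O * P (t + 1) * Λ) := by
  -- `P t * P (t+1) = P t` follows by taking adjoints of `hPmono`.
  have hP_le : ∀ t, P t * P (t + 1) = P t := by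
    intro t
    have := congrArg Matrix.conjTranspose (hPmono t)
    simpa [Matrix.conjTranspose_mul, (hPherm t).eq, (hPherm (t + 1)).eq] using this
  intro t
  set Q := Λ' * P (t + 1) with hQ
  set R := P t * Λ with hR
  set A := Λ' * P (t + 2) * O * P (t + 1) * Λ with hA
  -- the key algebraic identity: the LHS matrix is the compression `Q * A * R`.
  have key : Λ' * P (t + 1) * O * P t * Λ = Q * A * R := by
    refine Eq.symm ?_
    have h1 : Λ' * P (t + 1) * Λ' = Λ' * P (t + 1) := by
      rw [mul_assoc, ← hΛ'comm, ← mul_assoc, hΛ'idem]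
    calc Q * A * R
        = Λ' * P (t + 1) * Λ' * (P (t + 2) * O * (P (t + 1) * (Λ * P t * Λ))) := by
          rw [hQ, hA, hR]; noncomm_ring
      _ = Λ' * P (t + 1) * (P (t + 2) * O * (P (t + 1) * (P t * Λ))) := by
          rw [h1, hΛcomm, mul_assoc (P t) Λ Λ, hΛidem]
      _ = Λ' * (P (t + 1) * P (t + 2)) * O * (P (t + 1) * P t) * Λ := by
          noncomm_ring
      _ = Λ' * P (t + 1) * O * P t * Λ := by rw [hP_le, hPmono]
  rw [key]
  have hQnorm : specNorm Q ≤ 1 := by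
    rw [hQ]
    refine specNorm_proj_le_one _ ?_ ?_
    · show (Λ' * P (t + 1)).conjTranspose = Λ' * P (t + 1)
      rw [Matrix.conjTranspose_mul, (hPherm (t + 1)).eq, hΛ'herm.eq, ← hΛ'comm]
    · rw [mul_assoc, ← mul_assoc (P (t + 1)), ← hΛ'comm, mul_assoc, hPidem,
        ← mul_assoc, hΛ'idem]
  have hRnorm : specNorm R ≤ 1 := by
    rw [hR]
    refine specNorm_proj_le_one _ ?_ ?_
    · show (P t * Λ).conjTranspose = P t * Λ
      rw [Matrix.conjTranspose_mul, (hPherm t).eq, hΛherm.eq, hΛcomm]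
    · rw [mul_assoc, ← mul_assoc Λ, hΛcomm, mul_assoc, hΛidem, ← mul_assoc, hPidem]
  have h1 : specNorm (Q * A * R) ≤ specNorm (Q * A) * specNorm R := specNorm_mul_le _ _
  have h2 : specNorm (Q * A) ≤ specNorm Q * specNorm A := specNorm_mul_le _ _
  have hAnn : (0:ℝ) ≤ specNorm A := norm_nonneg _
  have hQAnn : (0:ℝ) ≤ specNorm (Q * A) := norm_nonneg _
  have hQnn : (0:ℝ) ≤ specNorm Q := norm_nonneg _
  have hRnn : (0:ℝ) ≤ specNorm R := norm_nonneg _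
  nlinarith
end

section
/- Let Γ be Hermitian positive semidefinite with eigendecomposition having all eigenvalues ≥ 1, let λ > 1, let Λ_bad project onto the eigenspaces of Γ with eigenvalue < λ and Λ_good = I − Λ_bad. Let |Ψ⟩ and |Φ⟩ be unit vectors on a bipartite space W ⊗ H with |⟨Ψ|Φ⟩| ≥ sqrt(1−ε), and suppose that for every unit vector |χ⟩ in range(I_W ⊗ Λ_bad), |⟨χ|Φ⟩| ≤ sqrt(η), where ε, η ∈ [0,1] with η ≤ 1 − ε. Then ⟨Ψ| (I_W ⊗ Γ) |Ψ⟩ ≥ 1 + (λ−1)(sqrt(1−ε) − sqrt(η))². -/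
open Kronecker ComplexOrder

open Matrix
section AuxS19

noncomputable def ipc {n : Type*} [Fintype n] (x y : n → ℂ) : ℂ :=
  @inner ℂ (EuclideanSpace ℂ n) _ (WithLp.toLp 2 x) (WithLp.toLp 2 y)

noncomputable def nrm {n : Type*} [Fintype n] (x : n → ℂ) : ℝ :=
  @norm (EuclideanSpace ℂ n) _ (WithLp.toLp 2 x)

variable {n : Type*} [Fintype n]

lemma ipc_eq_sum (x y : n → ℂ) : ipc x y = ∑ i, star (x i) * y i := by
  simp [ipc, PiLp.inner_apply, RCLike.inner_apply, Complex.star_def]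
  exact Finset.sum_congr rfl fun _ _ => mul_comm _ _

lemma nrm_nonneg (x : n → ℂ) : 0 ≤ nrm x := norm_nonneg _

lemma nrm_sq (x : n → ℂ) : nrm x ^ 2 = ∑ i, ‖x i‖ ^ 2 := by
  rw [nrm, EuclideanSpace.norm_eq, Real.sq_sqrt (by positivity)]

lemma ipc_abs_le (x y : n → ℂ) : ‖ipc x y‖ ≤ nrm x * nrm y := by
  have := norm_inner_le_norm (𝕜 := ℂ) (E := EuclideanSpace ℂ n) (WithLp.toLp 2 x) (WithLp.toLp 2 y)
  simpa [ipc, nrm] using this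

lemma ipc_herm (P : Matrix n n ℂ) (hP : Pᴴ = P) (x y : n → ℂ) :
    ipc (P.mulVec x) y = ipc x (P.mulVec y) := by
  rw [ipc_eq_sum, ipc_eq_sum]
  have h1 : (∑ i, star ((P.mulVec x) i) * y i) = dotProduct (star (P.mulVec x)) y := rfl
  have h2 : (∑ i, star (x i) * (P.mulVec y) i) = dotProduct (star x) (P.mulVec y) := rfl
  rw [h1, h2, Matrix.star_mulVec, Matrix.dotProduct_mulVec, hP]

lemma ipc_add_left (x y z : n → ℂ) : ipc (x + y) z = ipc x z + ipc y z :=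
  inner_add_left (𝕜 := ℂ) (E := EuclideanSpace ℂ n) (WithLp.toLp 2 x) (WithLp.toLp 2 y) (WithLp.toLp 2 z)

lemma ipc_add_right (x y z : n → ℂ) : ipc x (y + z) = ipc x y + ipc x z :=
  inner_add_right (𝕜 := ℂ) (E := EuclideanSpace ℂ n) (WithLp.toLp 2 x) (WithLp.toLp 2 y) (WithLp.toLp 2 z)

lemma ipc_sub_right (x y z : n → ℂ) : ipc x (y - z) = ipc x y - ipc x z :=
  inner_sub_right (𝕜 := ℂ) (E := EuclideanSpace ℂ n) (WithLp.toLp 2 x) (WithLp.toLp 2 y) (WithLp.toLp 2 z)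

lemma ipc_smul_left (c : ℂ) (x y : n → ℂ) : ipc (c • x) y = star c * ipc x y := by
  have := inner_smul_left (𝕜 := ℂ) (E := EuclideanSpace ℂ n) (WithLp.toLp 2 x) (WithLp.toLp 2 y) c
  simp only [ipc, WithLp.toLp_smul]; exact this

lemma ipc_smul_right (c : ℂ) (x y : n → ℂ) : ipc x (c • y) = c * ipc x y :=
  inner_smul_right (𝕜 := ℂ) (E := EuclideanSpace ℂ n) (WithLp.toLp 2 x) (WithLp.toLp 2 y) c

lemma ipc_self (x : n → ℂ) : ipc x x = ((nrm x : ℝ) : ℂ) ^ 2 :=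
  inner_self_eq_norm_sq_to_K (𝕜 := ℂ) (E := EuclideanSpace ℂ n) (WithLp.toLp 2 x)

lemma ipc_conj (x y : n → ℂ) : ipc y x = star (ipc x y) := by
  rw [ipc_eq_sum, ipc_eq_sum, star_sum]
  apply Finset.sum_congr rfl
  intro i _
  simp [star_mul']
  ring

lemma nrm_smul (c : ℂ) (x : n → ℂ) : nrm (c • x) = ‖c‖ * nrm x := by
  have := norm_smul (α := ℂ) (β := EuclideanSpace ℂ n) c (WithLp.toLp 2 x)
  simpa [nrm] using this

lemma nrm_add_sq (x y : n → ℂ) (h : ipc x y = 0) :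
    nrm (x + y) ^ 2 = nrm x ^ 2 + nrm y ^ 2 := by
  have := norm_add_sq (𝕜 := ℂ) (E := EuclideanSpace ℂ n) (WithLp.toLp 2 x) (WithLp.toLp 2 y)
  rw [show @inner ℂ (EuclideanSpace ℂ n) _ (WithLp.toLp 2 x) (WithLp.toLp 2 y) = ipc x y from rfl, h] at this
  simpa [nrm] using this

lemma aux_kron_conjT {a b : Type*} [Fintype a] [Fintype b]
    (A : Matrix a a ℂ) (B : Matrix b b ℂ) : (A ⊗ₖ B)ᴴ = Aᴴ ⊗ₖ Bᴴ := by
  ext ⟨i, k⟩ ⟨j, l⟩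
  simp [Matrix.conjTranspose_apply, Matrix.kroneckerMap_apply, star_mul', mul_comm]

lemma aux_kron_psd {a b : Type*} [Fintype a] [Fintype b] [DecidableEq a] [DecidableEq b]
    (M : Matrix b b ℂ) (hM : M.PosSemidef) :
    ((1 : Matrix a a ℂ) ⊗ₖ M).PosSemidef := by
  obtain ⟨B, rfl⟩ : ∃ B : Matrix b b ℂ, M = Bᴴ * B := by
    open scoped MatrixOrder in exact CStarAlgebra.nonneg_iff_eq_star_mul_self.mp hM.nonneg
  have : (1 : Matrix a a ℂ) ⊗ₖ (Bᴴ * B)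
      = ((1 : Matrix a a ℂ) ⊗ₖ B)ᴴ * ((1 : Matrix a a ℂ) ⊗ₖ B) := by
    rw [aux_kron_conjT, ← Matrix.mul_kronecker_mul]
    simp
  rw [this]
  exact Matrix.posSemidef_conjTranspose_mul_self _

lemma ipc_self_real (x : n → ℂ) :
    ipc x x = ((∑ i, ‖x i‖ ^ 2 : ℝ) : ℂ) := by
  rw [ipc_self, ← nrm_sq]
  push_cast
  ring

end AuxS19

/-- Let `Γ ⪰ I` be Hermitian on `H = ℂ^d` with complementary
spectral projectors `Λ_good`, `Λ_bad` such that `Γ ⪰ λ·Λ_good + Λ_bad` for some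
`λ > 1`.  Let `|Ψ⟩, |Φ⟩` be unit vectors on `W ⊗ H = ℂ^m ⊗ ℂ^d` with
`|⟨Ψ|Φ⟩| ≥ √(1−ε)`, and suppose that the overlap of `|Φ⟩` with every unit vector in
the range of `I_W ⊗ Λ_bad` is at most `√η`, where `ε, η ∈ [0,1]` and `η ≤ 1 − ε`.
Then `⟨Ψ|(I_W ⊗ Γ)|Ψ⟩ ≥ 1 + (λ−1)(√(1−ε) − √η)²`. -/
theorem output_condition (m d : ℕ) (Γ Λbad : Matrix (Fin d) (Fin d) ℂ)
    (lam ε η : ℝ) (hlam : 1 < lam)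
    (hε0 : 0 ≤ ε) (hε1 : ε ≤ 1) (hη0 : 0 ≤ η) (hη : η ≤ 1 - ε)
    (hΓherm : Γ.IsHermitian)
    (hΛherm : Λbad.IsHermitian) (hΛidem : Λbad * Λbad = Λbad)
    (hΛcomm : Γ * Λbad = Λbad * Γ)
    (hΓge1 : (Γ - 1).PosSemidef)
    (hΓgood : (Γ - ((lam : ℂ) • (1 - Λbad) + Λbad)).PosSemidef)
    (ψ φ : Fin m × Fin d → ℂ)
    (hψ : ∑ i, ‖ψ i‖ ^ 2 = 1)
    (hφ : ∑ i, ‖φ i‖ ^ 2 = 1)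
    (hover : Real.sqrt (1 - ε) ≤ ‖∑ i, star (ψ i) * φ i‖)
    (hbad : ∀ χ : Fin m × Fin d → ℂ,
      ((1 : Matrix (Fin m) (Fin m) ℂ) ⊗ₖ Λbad).mulVec χ = χ →
      ∑ i, ‖χ i‖ ^ 2 = 1 →
      ‖∑ i, star (χ i) * φ i‖ ≤ Real.sqrt η) :
    1 + (lam - 1) * (Real.sqrt (1 - ε) - Real.sqrt η) ^ 2 ≤
      (∑ i, star (ψ i) *
        (((1 : Matrix (Fin m) (Fin m) ℂ) ⊗ₖ Γ).mulVec ψ) i).re := by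
  classical
  set P : Matrix (Fin m × Fin d) (Fin m × Fin d) ℂ :=
    (1 : Matrix (Fin m) (Fin m) ℂ) ⊗ₖ Λbad with hPdef
  have hPH : Pᴴ = P := by
    rw [hPdef, aux_kron_conjT, hΛherm.eq, Matrix.conjTranspose_one]
  have hPP : P * P = P := by
    rw [hPdef, ← Matrix.mul_kronecker_mul, hΛidem, Matrix.one_mul]
  set u : Fin m × Fin d → ℂ := P.mulVec ψ with hudef
  set v : Fin m × Fin d → ℂ := ψ - u with hvdef
  have huv : u + v = ψ := by rw [hvdef]; abel
  have hPu : P.mulVec u = u := by rw [hudef, Matrix.mulVec_mulVec, hPP]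
  have hPv : P.mulVec v = 0 := by
    rw [hvdef, Matrix.mulVec_sub, hPu, ← hudef, sub_self]
  have hinner_uv : ipc u v = 0 := by
    rw [hudef, ipc_herm P hPH, hPv]
    simp [ipc_eq_sum]
  have hψnorm : nrm ψ = 1 := by
    have h := nrm_sq ψ
    nlinarith [nrm_nonneg ψ, h, hψ]
  have hφnorm : nrm φ = 1 := by
    have h := nrm_sq φ
    nlinarith [nrm_nonneg φ, h, hφ]
  have hpyth : nrm u ^ 2 + nrm v ^ 2 = 1 := by
    have h := nrm_add_sq u v hinner_uv
    rw [huv, hψnorm] at h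
    nlinarith [h]
  have hu_le : nrm u ≤ 1 := by
    nlinarith [nrm_nonneg u, nrm_nonneg v, hpyth]
  -- bad overlap bound
  have hbadu : ‖ipc u φ‖ ≤ Real.sqrt η := by
    by_cases hu0 : nrm u = 0
    · have : ‖ipc u φ‖ ≤ nrm u * nrm φ := ipc_abs_le u φ
      rw [hu0] at this
      simp at this
      calc ‖ipc u φ‖ ≤ 0 := by simp [this]
        _ ≤ Real.sqrt η := Real.sqrt_nonneg η
    · set c : ℂ := ((nrm u : ℝ) : ℂ)⁻¹ with hcdef
      set χ : Fin m × Fin d → ℂ := c • u with hχdef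
      have hχfix : P.mulVec χ = χ := by
        rw [hχdef, Matrix.mulVec_smul, hPu]
      have hcabs : ‖c‖ = (nrm u)⁻¹ := by
        rw [hcdef, norm_inv, Complex.norm_real, Real.norm_eq_abs, abs_of_nonneg (nrm_nonneg u)]
      have hχnrm : nrm χ = 1 := by
        rw [hχdef, nrm_smul, hcabs]
        field_simp
      have hχsum : ∑ i, ‖χ i‖ ^ 2 = 1 := by
        rw [← nrm_sq, hχnrm]; norm_num
      have hbadχ := hbad χ hχfix hχsum
      rw [← ipc_eq_sum] at hbadχ
      have hsmul : ipc χ φ = star c * ipc u φ := by rw [hχdef, ipc_smul_left]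
      have habs : ‖ipc χ φ‖ = (nrm u)⁻¹ * ‖ipc u φ‖ := by
        rw [hsmul, norm_mul, Complex.star_def, Complex.norm_conj, hcabs]
      rw [habs] at hbadχ
      have h1 : ‖ipc u φ‖ = nrm u * ((nrm u)⁻¹ * ‖ipc u φ‖) := by
        field_simp
      rw [h1]
      calc nrm u * ((nrm u)⁻¹ * ‖ipc u φ‖) ≤ 1 * Real.sqrt η := by
            exact mul_le_mul hu_le hbadχ
              (mul_nonneg (inv_nonneg.mpr (nrm_nonneg u)) (norm_nonneg _)) (by norm_num)
        _ = Real.sqrt η := one_mul _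
  -- Cauchy-Schwarz on v
  have hCS : ‖ipc v φ‖ ≤ nrm v := by
    have := ipc_abs_le v φ
    rwa [hφnorm, mul_one] at this
  -- triangle
  have htri : Real.sqrt (1 - ε) ≤ Real.sqrt η + nrm v := by
    have hsplit : (∑ i, star (ψ i) * φ i) = ipc u φ + ipc v φ := by
      rw [← ipc_eq_sum, ← huv, ipc_add_left]
    calc Real.sqrt (1 - ε) ≤ ‖∑ i, star (ψ i) * φ i‖ := hover
      _ = ‖ipc u φ + ipc v φ‖ := by rw [hsplit]
      _ ≤ ‖ipc u φ‖ + ‖ipc v φ‖ := norm_add_le _ _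
      _ ≤ Real.sqrt η + nrm v := add_le_add hbadu hCS
  have ht0 : 0 ≤ Real.sqrt (1 - ε) - Real.sqrt η := by
    have := Real.sqrt_le_sqrt hη
    linarith
  have hv_sq : (Real.sqrt (1 - ε) - Real.sqrt η) ^ 2 ≤ nrm v ^ 2 := by
    nlinarith [htri, ht0, nrm_nonneg v]
  -- matrix decomposition
  set N : Matrix (Fin m × Fin d) (Fin m × Fin d) ℂ :=
    (1 : Matrix (Fin m) (Fin m) ℂ) ⊗ₖ (Γ - ((lam : ℂ) • (1 - Λbad) + Λbad)) with hNdef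
  have hNpsd : N.PosSemidef := aux_kron_psd _ hΓgood
  have hGdec : (1 : Matrix (Fin m) (Fin m) ℂ) ⊗ₖ Γ
      = N + (lam : ℂ) • ((1 : Matrix (Fin m × Fin d) (Fin m × Fin d) ℂ) - P) + P := by
    have hone : (1 : Matrix (Fin m × Fin d) (Fin m × Fin d) ℂ)
        = (1 : Matrix (Fin m) (Fin m) ℂ) ⊗ₖ (1 : Matrix (Fin d) (Fin d) ℂ) :=
      (Matrix.one_kronecker_one).symm
    rw [hNdef, hPdef, hone]
    ext ⟨i, k⟩ ⟨j, l⟩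
    simp only [Matrix.add_apply, Matrix.sub_apply, Matrix.smul_apply,
      Matrix.kroneckerMap_apply, Matrix.one_apply, smul_eq_mul]
    split_ifs <;> ring
  -- final computation
  have hmv : ((1 : Matrix (Fin m) (Fin m) ℂ) ⊗ₖ Γ).mulVec ψ
      = N.mulVec ψ + (lam : ℂ) • (ψ - u) + u := by
    rw [hGdec, Matrix.add_mulVec, Matrix.add_mulVec, Matrix.smul_mulVec,
      Matrix.sub_mulVec, Matrix.one_mulVec, ← hudef]
  have hfinal : (∑ i, star (ψ i) *
      (((1 : Matrix (Fin m) (Fin m) ℂ) ⊗ₖ Γ).mulVec ψ) i).re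
      = (ipc ψ (N.mulVec ψ)).re + lam * nrm v ^ 2 + nrm u ^ 2 := by
    have hψu : ipc ψ (ψ - u) = ((nrm v ^ 2 : ℝ) : ℂ) := by
      rw [← hvdef, ← huv, ipc_add_left, hinner_uv, ipc_self]
      push_cast
      ring
    have hψuu : ipc ψ u = ((nrm u ^ 2 : ℝ) : ℂ) := by
      rw [← huv, ipc_add_left, ipc_conj u v, hinner_uv, ipc_self]
      push_cast
      simp
    rw [← ipc_eq_sum, hmv, ipc_add_right, ipc_add_right, ipc_smul_right, hψu, hψuu,
      ← Complex.ofReal_mul]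
    simp [Complex.add_re, ← Complex.ofReal_pow, Complex.ofReal_re]
  rw [hfinal]
  have hN0 : 0 ≤ (ipc ψ (N.mulVec ψ)).re := by
    have h := hNpsd.re_dotProduct_nonneg ψ
    simpa [ipc_eq_sum, dotProduct] using h
  have hkey : (lam - 1) * (Real.sqrt (1 - ε) - Real.sqrt η) ^ 2 ≤ (lam - 1) * nrm v ^ 2 :=
    mul_le_mul_of_nonneg_left hv_sq (by linarith)
  nlinarith [hN0, hpyth, hkey]
end
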